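/- arXiv:0805.1678 — 4 statements merged into one kernel-verified Lean document; each statement's English description precedes it below -/
import Mathlib

section
/- Let 0 < α < 1 and let λ be a nonnegative Borel measure on S¹ with λ(B(ω,δ)) ≤ C·δ^α for all ω and δ > 0. If A ⊆ S¹ is a Borel set with λ(A) > 0 and η > 0 is sufficiently small, then there exist N points ω₁,…,ω_N ∈ A with N ≥ c·η^{-α}·λ(A) for some constant c > 0 depending only on C, such that |ω_j − ω_k| ≥ c'·η·|j−k| for all j ≠ k. -/
open MeasureTheory Metric Set
open scoped ENNReal
noncomputable section
abbrev Plane := EuclideanSpace ℝ (Fin 2)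

lemma plane_norm_sq (w : Plane) : ‖w‖^2 = (w 0)^2 + (w 1)^2 := by
  rw [EuclideanSpace.norm_eq, Real.sq_sqrt (by positivity)]
  simp [Fin.sum_univ_two, sq_abs]

lemma plane_abs_coord_le (w : Plane) (i : Fin 2) : |w i| ≤ ‖w‖ := by
  have h := plane_norm_sq w
  have h2 : (w i)^2 ≤ ‖w‖^2 := by
    rcases i with ⟨iv, hiv⟩
    interval_cases iv <;> simp only [Fin.mk_zero, Fin.mk_one] <;> nlinarith [sq_nonneg (w 0), sq_nonneg (w 1)]
  calc |w i| = Real.sqrt ((w i)^2) := (Real.sqrt_sq_eq_abs _).symm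
    _ ≤ Real.sqrt (‖w‖^2) := Real.sqrt_le_sqrt h2
    _ = ‖w‖ := by rw [Real.sqrt_sq (norm_nonneg w)]

lemma sphere_coord (p : Metric.sphere (0 : Plane) 1) :
    ((p : Plane) 0)^2 + ((p : Plane) 1)^2 = 1 := by
  have h : ‖(p : Plane)‖ = 1 := by simpa using mem_sphere_zero_iff_norm.mp p.2
  have h2 := plane_norm_sq (p : Plane)
  rw [h] at h2
  nlinarith [h2]

lemma plane_sub_apply (w z : Plane) (i : Fin 2) : (w - z) i = w i - z i := rfl

lemma small_controls {x y u v : ℝ} (h1 : x^2 + y^2 = 1) (h2 : u^2 + v^2 = 1)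
    (hy : 1/2 ≤ y^2) (hv : 1/2 ≤ v^2) (hs : 0 ≤ y * v) :
    (y - v)^2 ≤ (x - u)^2 := by
  have h3 : y^2 - v^2 = u^2 - x^2 := by linarith
  have hyv : 1/2 ≤ y * v := by nlinarith
  have e1 : (y - v)^2 * (y + v)^2 = (x - u)^2 * (x + u)^2 := by
    linear_combination (y^2 - v^2 + u^2 - x^2) * h3
  have e2 : 2 ≤ (y + v)^2 := by nlinarith
  have e3 : (x + u)^2 ≤ 2 := by nlinarith [sq_nonneg (x - u)]
  nlinarith [sq_nonneg (y - v), sq_nonneg (x - u), e1, e2, e3]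


lemma key_est (p q : Metric.sphere (0 : Plane) 1) (b ob : Fin 2) (hbo : b ≠ ob)
    (hp : 1/2 ≤ ((p : Plane) b)^2) (hq : 1/2 ≤ ((q : Plane) b)^2)
    (hsign : 0 ≤ (p : Plane) b * (q : Plane) b) :
    ‖(p : Plane) - (q : Plane)‖^2 ≤ 2 * ((p : Plane) ob - (q : Plane) ob)^2 := by
  have h1 := sphere_coord p
  have h2 := sphere_coord q
  have hw := plane_norm_sq ((p : Plane) - (q : Plane))
  rw [plane_sub_apply, plane_sub_apply] at hw
  rw [hw]
  fin_cases b <;> fin_cases ob <;> simp only [Fin.isValue, Fin.zero_eta, Fin.mk_one] at *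
  · exact absurd rfl hbo
  · have := small_controls (x := (p:Plane) 1) (y := (p:Plane) 0) (u := (q:Plane) 1)
      (v := (q:Plane) 0) (by linarith) (by linarith) hp hq hsign
    linarith
  · have := small_controls (x := (p:Plane) 0) (y := (p:Plane) 1) (u := (q:Plane) 0)
      (v := (q:Plane) 1) (by linarith) (by linarith) hp hq hsign
    linarith
  · exact absurd rfl hbo

lemma tele {η : ℝ} {N : ℕ} (v : ℕ → ℝ) (h : ∀ i, i + 1 < N → η ≤ v (i + 1) - v i) :
    ∀ d i, i + d < N → η * d ≤ v (i + d) - v i := by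
  intro d
  induction d with
  | zero => intro i _; simp
  | succ d ih =>
    intro i hi
    have hd := ih i (by omega)
    have hstep := h (i + d) (by omega)
    have he : i + (d + 1) = (i + d) + 1 := by omega
    rw [he]
    push_cast
    push_cast at hd
    linarith

lemma card_sep {η : ℝ} (hη : 0 < η) (T : Finset ℝ)
    (hT : ∀ x ∈ T, |x| ≤ 1)
    (hsep : ∀ x ∈ T, ∀ y ∈ T, x ≠ y → η ≤ |x - y|) :
    T.card ≤ (⌊2/η⌋ + 1).toNat := by
  have key : ∀ a ∈ T, ∀ b ∈ T, a < b → ⌊(a+1)/η⌋ < ⌊(b+1)/η⌋ := by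
    intro a ha b hb hab
    have hba : η ≤ b - a := by
      have := hsep a ha b hb (ne_of_lt hab)
      rwa [abs_sub_comm, abs_of_pos (by linarith)] at this
    have h1 : (a+1)/η + 1 ≤ (b+1)/η := by
      have h2 : (b+1)/η - (a+1)/η = (b-a)/η := by ring
      have h3 := (one_le_div hη).mpr hba
      linarith
    have := Int.floor_le_floor h1
    rw [Int.floor_add_one] at this
    omega
  have hmaps : ∀ x ∈ T, ⌊(x+1)/η⌋ ∈ Finset.Icc (0:ℤ) ⌊2/η⌋ := by
    intro x hx
    have hx1 := abs_le.mp (hT x hx)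
    refine Finset.mem_Icc.mpr ⟨Int.floor_nonneg.mpr (div_nonneg (by linarith) hη.le), ?_⟩
    apply Int.floor_le_floor
    gcongr
    linarith
  calc T.card ≤ (Finset.Icc (0:ℤ) ⌊2/η⌋).card := by
        apply Finset.card_le_card_of_injOn _ hmaps
        intro x hx y hy hxy
        by_contra hne
        rcases lt_or_gt_of_ne hne with h | h
        · exact absurd hxy (ne_of_lt (key x hx y hy h))
        · exact absurd hxy.symm (ne_of_lt (key y hy x hx h))
    _ = (⌊2/η⌋ + 1).toNat := by rw [Int.card_Icc]; norm_num


set_option maxHeartbeats 1000000 in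
theorem stmt1 (α : ℝ) (hα : 0 < α) (hα1 : α < 1) (C : ℝ) (hC : 0 < C) :
    ∃ c > (0 : ℝ), ∃ c' > (0 : ℝ),
      ∀ (lam : Measure (Metric.sphere (0 : Plane) 1)), IsFiniteMeasure lam →
        (∀ (ω : Metric.sphere (0 : Plane) 1) (δ : ℝ), 0 < δ →
          lam (Metric.ball ω δ) ≤ ENNReal.ofReal (C * δ ^ α)) →
      ∀ A : Set (Metric.sphere (0 : Plane) 1), MeasurableSet A → 0 < lam A →
        ∃ η₀ > (0 : ℝ), ∀ η : ℝ, 0 < η → η < η₀ →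
          ∃ (N : ℕ) (ω : Fin N → Metric.sphere (0 : Plane) 1),
            (∀ j, ω j ∈ A) ∧
            c * η ^ (-α) * (lam A).toReal ≤ (N : ℝ) ∧
            ∀ j k : Fin N, j ≠ k →
              c' * η * |(j : ℝ) - (k : ℝ)| ≤ ‖(ω j : Plane) - (ω k : Plane)‖ := by
  classical
  refine ⟨(8*C)⁻¹, by positivity, 1, one_pos, ?_⟩
  intro lam hfin hfrost A hAmeas hApos
  refine ⟨1, one_pos, ?_⟩
  intro η hη _
  -- the four regions
  set J : Fin 2 × Bool → Set (Metric.sphere (0:Plane) 1) :=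
    fun bs => {p | 1/2 ≤ ((p:Plane) bs.1)^2 ∧
      0 ≤ (if bs.2 then 1 else -1 : ℝ) * (p:Plane) bs.1} with hJ
  have hcov : A ⊆ ⋃ i ∈ (Finset.univ : Finset (Fin 2 × Bool)), A ∩ J i := by
    intro p hp
    have hc := sphere_coord p
    have hb : 1/2 ≤ ((p:Plane) 0)^2 ∨ 1/2 ≤ ((p:Plane) 1)^2 := by
      by_contra hcon; push_neg at hcon; nlinarith [hcon.1, hcon.2]
    have : ∃ i : Fin 2 × Bool, p ∈ J i := by
      rcases hb with hb | hb
      · rcases le_or_gt 0 ((p:Plane) 0) with hs | hs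
        · exact ⟨(0, true), hb, by simpa using hs⟩
        · exact ⟨(0, false), hb, by simp; linarith⟩
      · rcases le_or_gt 0 ((p:Plane) 1) with hs | hs
        · exact ⟨(1, true), hb, by simpa using hs⟩
        · exact ⟨(1, false), hb, by simp; linarith⟩
    obtain ⟨i, hi⟩ := this
    exact Set.mem_biUnion (Finset.mem_univ i) ⟨hp, hi⟩
  obtain ⟨i₀, -, hmax⟩ := Finset.exists_max_image (Finset.univ : Finset (Fin 2 × Bool))
      (fun i => lam (A ∩ J i)) ⟨(0, true), Finset.mem_univ _⟩
  have hsum : lam A ≤ 4 * lam (A ∩ J i₀) := by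
    calc lam A ≤ lam (⋃ i ∈ Finset.univ, A ∩ J i) := measure_mono hcov
      _ ≤ ∑ i ∈ Finset.univ, lam (A ∩ J i) := measure_biUnion_finset_le _ _
      _ ≤ (Finset.univ : Finset (Fin 2 × Bool)).card • lam (A ∩ J i₀) :=
          Finset.sum_le_card_nsmul _ _ _ (fun i _ => hmax i (Finset.mem_univ i))
      _ = 4 * lam (A ∩ J i₀) := by
          rw [Finset.card_univ]
          simp [nsmul_eq_mul]
  set A' := A ∩ J i₀ with hA'
  set b := i₀.1 with hbdef
  set ob : Fin 2 := if b = 0 then 1 else 0 with hob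
  have hbo : b ≠ ob := by by_cases h : b = 0 <;> simp [hob, h]
  have hob2 : ob = 0 ∨ ob = 1 := by by_cases h : b = 0 <;> simp [hob, h]
  set f : Metric.sphere (0:Plane) 1 → ℝ := fun p => (p:Plane) ob with hfdef
  have hf1 : ∀ p : Metric.sphere (0:Plane) 1, |f p| ≤ 1 := by
    intro p
    have hc := sphere_coord p
    rw [abs_le]
    rcases hob2 with h | h <;> rw [hfdef] <;> rw [h] <;>
      constructor <;> nlinarith [sq_nonneg ((p:Plane) 0), sq_nonneg ((p:Plane) 1)]
  have hdist : ∀ p q : Metric.sphere (0:Plane) 1, p ∈ J i₀ → q ∈ J i₀ →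
      ‖(p:Plane) - (q:Plane)‖^2 ≤ 2 * (f p - f q)^2 := by
    intro p q hp hq
    apply key_est p q b ob hbo hp.1 hq.1
    have hp2 := hp.2
    have hq2 := hq.2
    cases hsgn : i₀.2 <;> rw [hsgn] at hp2 hq2 <;> simp at hp2 hq2
    · nlinarith [mul_nonneg (neg_nonneg.2 hp2) (neg_nonneg.2 hq2)]
    · exact mul_nonneg hp2 hq2
  -- maximal separated families
  set P : Finset (Metric.sphere (0:Plane) 1) → Prop :=
    fun S => ↑S ⊆ A' ∧ ∀ s ∈ S, ∀ t ∈ S, s ≠ t → η ≤ |f s - f t| with hP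
  have hbound : ∀ S, P S → S.card ≤ (⌊2/η⌋ + 1).toNat := by
    intro S hS
    have hinj : Set.InjOn f ↑S := by
      intro s hs t ht hst
      by_contra hne
      have h := hS.2 s hs t ht hne
      rw [hst, sub_self, abs_zero] at h
      linarith
    rw [← Finset.card_image_of_injOn hinj]
    apply card_sep hη
    · intro x hx; obtain ⟨s, hs, rfl⟩ := Finset.mem_image.mp hx; exact hf1 s
    · intro x hx y hy hxy
      obtain ⟨s, hs, rfl⟩ := Finset.mem_image.mp hx
      obtain ⟨t, ht, rfl⟩ := Finset.mem_image.mp hy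
      exact hS.2 s hs t ht (fun h => hxy (by rw [h]))
  set ns : Set ℕ := {n | ∃ S, P S ∧ S.card = n} with hns
  have h0 : 0 ∈ ns := ⟨∅, ⟨by simp, by simp⟩, rfl⟩
  have hbdd : BddAbove ns := ⟨(⌊2/η⌋ + 1).toNat, fun n ⟨S, hS, hc⟩ => hc ▸ hbound S hS⟩
  obtain ⟨S, hPS, hcard⟩ := Nat.sSup_mem ⟨0, h0⟩ hbdd
  set N := sSup ns with hN
  -- maximality gives a net
  have hnet : ∀ a ∈ A', ∃ s ∈ S, |f a - f s| < η := by
    by_contra hcon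
    push_neg at hcon
    obtain ⟨a, ha, hfar⟩ := hcon
    have haS : a ∉ S := by
      intro h
      have h2 := hfar a h
      rw [sub_self, abs_zero] at h2
      linarith
    have hPins : P (insert a S) := by
      constructor
      · rw [Finset.coe_insert]; exact Set.insert_subset ha hPS.1
      · intro s hs t ht hst
        rcases Finset.mem_insert.mp hs with rfl | hs'
        · rcases Finset.mem_insert.mp ht with rfl | ht'
          · exact absurd rfl hst
          · exact hfar t ht'
        · rcases Finset.mem_insert.mp ht with rfl | ht'
          · rw [abs_sub_comm]; exact hfar s hs'
          · exact hPS.2 s hs' t ht' hst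
    have hmem : N + 1 ∈ ns :=
      ⟨insert a S, hPins, by rw [Finset.card_insert_of_notMem haS, hcard]⟩
    have := le_csSup hbdd hmem
    omega
  -- covering by balls
  have hball : A' ⊆ ⋃ s ∈ S, Metric.ball s (2*η) := by
    intro a ha
    obtain ⟨s, hs, hfs⟩ := hnet a ha
    have hd2 := hdist a s ha.2 (hPS.1 hs).2
    have hlt : dist a s < 2*η := by
      rw [Subtype.dist_eq, dist_eq_norm]
      nlinarith [norm_nonneg ((a:Plane) - (s:Plane)), sq_abs (f a - f s),
        abs_nonneg (f a - f s)]
    exact Set.mem_biUnion hs (Metric.mem_ball.mpr hlt)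
  have hcount : lam A' ≤ (N : ℝ≥0∞) * ENNReal.ofReal (C * (2*η)^α) := by
    calc lam A' ≤ lam (⋃ s ∈ S, Metric.ball s (2*η)) := measure_mono hball
      _ ≤ ∑ s ∈ S, lam (Metric.ball s (2*η)) := measure_biUnion_finset_le _ _
      _ ≤ ∑ s ∈ S, ENNReal.ofReal (C * (2*η)^α) :=
          Finset.sum_le_sum (fun s _ => hfrost s (2*η) (by linarith))
      _ = (N : ℝ≥0∞) * ENNReal.ofReal (C * (2*η)^α) := by
          rw [Finset.sum_const, hcard, nsmul_eq_mul]
  have hAne : lam A ≠ ⊤ := measure_ne_top lam A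
  have hXpos : 0 < (lam A).toReal := ENNReal.toReal_pos (ne_of_gt hApos) hAne
  have hchain : lam A ≤ 4 * ((N : ℝ≥0∞) * ENNReal.ofReal (C * (2*η)^α)) := by
    calc lam A ≤ 4 * lam A' := hsum
      _ ≤ _ := by gcongr
  have hreal : (lam A).toReal ≤ 4 * (N * (C * (2*η)^α)) := by
    have hrhs : (4 * ((N : ℝ≥0∞) * ENNReal.ofReal (C * (2*η)^α))) ≠ ⊤ := by
      apply ENNReal.mul_ne_top (by simp)
      exact ENNReal.mul_ne_top (ENNReal.natCast_ne_top N) ENNReal.ofReal_ne_top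
    have h := (ENNReal.toReal_le_toReal hAne hrhs).mpr hchain
    rw [ENNReal.toReal_mul, ENNReal.toReal_mul, ENNReal.toReal_ofReal (by positivity),
      ENNReal.toReal_natCast, ENNReal.toReal_ofNat] at h
    exact h
  have hcount2 : (8*C)⁻¹ * η ^ (-α) * (lam A).toReal ≤ (N : ℝ) := by
    have h2a : (2*η)^α = 2^α * η^α := Real.mul_rpow (by norm_num) hη.le
    have h2le : (2:ℝ)^α ≤ 2 := by
      calc (2:ℝ)^α ≤ (2:ℝ)^(1:ℝ) := Real.rpow_le_rpow_of_exponent_le one_le_two hα1.le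
        _ = 2 := Real.rpow_one 2
    have hetapos : (0:ℝ) < η^α := Real.rpow_pos_of_pos hη α
    have h8 : (lam A).toReal ≤ 8 * C * η^α * N := by
      rw [h2a] at hreal
      nlinarith [mul_le_mul_of_nonneg_right h2le
        (by positivity : (0:ℝ) ≤ C * η^α * N)]
    rw [Real.rpow_neg hη.le]
    have hpos8 : (0:ℝ) < 8*C := by linarith
    calc (8*C)⁻¹ * (η^α)⁻¹ * (lam A).toReal
        ≤ (8*C)⁻¹ * (η^α)⁻¹ * (8*C*η^α*N) := by
          apply mul_le_mul_of_nonneg_left h8 (by positivity)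
      _ = N := by field_simp
  -- injectivity of f on S, ordering
  have hSinj : Set.InjOn f ↑S := by
    intro s hs t ht hst
    by_contra hne
    have h := hPS.2 s hs t ht hne
    rw [hst, sub_self, abs_zero] at h
    linarith
  set T := S.image f with hT
  have hTcard : T.card = N := by rw [hT, Finset.card_image_of_injOn hSinj, hcard]
  set e := T.orderIsoOfFin hTcard with he
  have hsel : ∀ j : Fin N, ∃ s, s ∈ S ∧ f s = (e j : ℝ) := by
    intro j
    have hmem : (e j : ℝ) ∈ T := (e j).2
    obtain ⟨s, hs, hfs⟩ := Finset.mem_image.mp hmem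
    exact ⟨s, hs, hfs⟩
  choose ω hωS hωf using hsel
  refine ⟨N, ω, fun j => (hPS.1 (hωS j)).1, hcount2, ?_⟩
  -- separation
  set v : ℕ → ℝ := fun i => if h : i < N then (e ⟨i, h⟩ : ℝ) else 0 with hv
  have hstep : ∀ i, i + 1 < N → η ≤ v (i+1) - v i := by
    intro i hi
    have hi' : i < N := by omega
    have hlt : (e ⟨i, hi'⟩ : ℝ) < (e ⟨i+1, hi⟩ : ℝ) := by
      have := e.strictMono (show (⟨i, hi'⟩ : Fin N) < ⟨i+1, hi⟩ from by
        simp [Fin.lt_def])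
      exact_mod_cast this
    have hne : ω ⟨i+1, hi⟩ ≠ ω ⟨i, hi'⟩ := by
      intro h
      rw [← hωf ⟨i+1, hi⟩, ← hωf ⟨i, hi'⟩, h] at hlt
      exact lt_irrefl _ hlt
    have hsep := hPS.2 (ω ⟨i+1, hi⟩) (hωS _) (ω ⟨i, hi'⟩) (hωS _) hne
    rw [hωf, hωf] at hsep
    rw [abs_of_pos (by linarith)] at hsep
    rw [hv]
    simp only []
    rw [dif_pos hi, dif_pos hi']
    exact hsep
  have hmain : ∀ j k : Fin N, j < k →
      1 * η * |(j : ℝ) - (k : ℝ)| ≤ ‖(ω j : Plane) - (ω k : Plane)‖ := by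
    intro j k hjk
    have hjk' : (j : ℕ) < (k : ℕ) := hjk
    have htel := tele v hstep ((k : ℕ) - (j : ℕ)) (j : ℕ) (by omega)
    have hidx : (j : ℕ) + ((k : ℕ) - (j : ℕ)) = (k : ℕ) := by omega
    rw [hidx] at htel
    have hvj : v (j : ℕ) = f (ω j) := by
      rw [hv]; simp only []; rw [dif_pos j.isLt]
      rw [hωf]
    have hvk : v (k : ℕ) = f (ω k) := by
      rw [hv]; simp only []; rw [dif_pos k.isLt]
      rw [hωf]
    rw [hvj, hvk] at htel
    have hnorm : f (ω k) - f (ω j) ≤ ‖(ω j : Plane) - (ω k : Plane)‖ := by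
      rw [norm_sub_rev]
      have h1 := plane_abs_coord_le ((ω k : Plane) - (ω j : Plane)) ob
      rw [plane_sub_apply] at h1
      calc f (ω k) - f (ω j) ≤ |f (ω k) - f (ω j)| := le_abs_self _
        _ ≤ ‖(ω k : Plane) - (ω j : Plane)‖ := h1
    have habs : |(j : ℝ) - (k : ℝ)| = ((k : ℕ) - (j : ℕ) : ℕ) := by
      have hcast : ((j:ℕ):ℝ) < ((k:ℕ):ℝ) := by exact_mod_cast hjk'
      rw [abs_sub_comm, abs_of_pos (by linarith)]
      push_cast [Nat.cast_sub hjk'.le]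
      ring
    rw [habs, one_mul]
    calc η * (((k : ℕ) - (j : ℕ) : ℕ) : ℝ) ≤ f (ω k) - f (ω j) := htel
      _ ≤ _ := hnorm
  intro j k hjk
  rcases lt_or_gt_of_ne hjk with h | h
  · exact hmain j k h
  · have := hmain k j h
    rw [norm_sub_rev, abs_sub_comm] at this
    exact this
end
end

section
/- Let Rf(t,ω) = ∫_{−1}^1 f(tω + sω^⊥) ds and let λ be a Borel measure on S¹ with λ(B(ω₀,δ)) ≥ c·δ^α for some fixed ω₀ ∈ S¹ and all small δ > 0. If the inequality ( ∫_{S¹} ( ∫_{−1}^1 |Rf(t,ω)|^s dt )^{q/s} dλ(ω) )^{1/q} ≤ C‖f‖_{L^p(ℝ²)} holds for all f, then 1/p ≤ 1/s + α/q. -/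
open MeasureTheory Metric Set
open scoped ENNReal

noncomputable section

abbrev Circ := Metric.sphere (0 : Plane) 1

/-- The restricted Radon transform. -/
def Rad (perp : Circ → Plane) (f : Plane → ℝ) (t : ℝ) (ω : Circ) : ℝ :=
  ∫ s in (-1 : ℝ)..1, f (t • (ω : Plane) + s • perp ω)

/-- The mixed norm on the left-hand side of the estimate. -/
def mixedNorm (lam : Measure Circ) (s q : ℝ) (g : ℝ → Circ → ℝ) : ℝ≥0∞ :=
  (∫⁻ ω, (ENNReal.ofReal (∫ t in (-1 : ℝ)..1, |g t ω| ^ s)) ^ (q / s) ∂lam) ^ (1 / q)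


/-! The estimate is tested on the indicator of a thin rectangle: width `4δ` across `ω₀`,
length `4` along `perp ω₀`, area `16δ`. For every `ω` in the ball of radius `δ` about `ω₀` and
every `|t| ≤ δ`, the whole unit segment `t ω + [-1, 1] perp ω` lies in the rectangle, so the
Radon transform equals `2` there. Hence the left side is at least `(2^s · 2δ)^{1/s} (c δ^α)^{1/q}`
while the right side is `|C| (16δ)^{1/p}`, and letting `δ → 0` compares the exponents. -/

open Filter Topology
open scoped RealInnerProductSpace

theorem le_of_eventually_mul_rpow_le {A B β γ : ℝ} (hA : 0 < A)
    (h : ∀ᶠ δ in 𝓝[>] 0, A * δ ^ β ≤ B * δ ^ γ) : γ ≤ β := by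
  by_contra! hβγ
  have hlim : Tendsto (fun δ : ℝ => B * δ ^ (γ - β)) (𝓝[>] 0) (𝓝 0) := by
    have : Tendsto (fun δ : ℝ => δ ^ (γ - β)) (𝓝 0) (𝓝 0) := by
      simpa [Real.zero_rpow (sub_pos.2 hβγ).ne'] using
        (Real.continuousAt_rpow_const 0 (γ - β) (Or.inr (sub_pos.2 hβγ).le)).tendsto
    simpa using (this.mono_left nhdsWithin_le_nhds).const_mul B
  refine hA.not_ge (ge_of_tendsto hlim ((h.and self_mem_nhdsWithin).mono fun δ ⟨hδ, hpos⟩ => ?_))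
  have hpos : (0 : ℝ) < δ := hpos
  rw [show γ = (γ - β) + β by ring, Real.rpow_add hpos, ← mul_assoc] at hδ
  exact le_of_mul_le_mul_right hδ (Real.rpow_pos_of_pos hpos β)

theorem exists_orthonormalBasis_fin_two {F : Type*} [NormedAddCommGroup F] [InnerProductSpace ℝ F]
    [FiniteDimensional ℝ F] (hF : Module.finrank ℝ F = 2) {u v : F} (hu : ‖u‖ = 1) (hv : ‖v‖ = 1)
    (huv : ⟪u, v⟫ = 0) : ∃ b : OrthonormalBasis (Fin 2) ℝ F, ⇑b = ![u, v] := by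
  have hon : Orthonormal ℝ ![u, v] := by simp [hu, hv, huv]
  exact ⟨(basisOfOrthonormalOfCardEqFinrank hon (by simp [hF])).toOrthonormalBasis
    (by rwa [coe_basisOfOrthonormalOfCardEqFinrank]), by simp⟩

theorem OrthonormalBasis.volume_setOf_abs_inner_le {ι F : Type*} [Fintype ι] [NormedAddCommGroup F]
    [InnerProductSpace ℝ F] [FiniteDimensional ℝ F] [MeasurableSpace F] [BorelSpace F]
    (b : OrthonormalBasis ι ℝ F) (a : ι → ℝ) :
    volume {x | ∀ i, |⟪b i, x⟫| ≤ a i} = ∏ i, ENNReal.ofReal (2 * a i) := by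
  have hbox : MeasurableSet (Set.pi univ fun i => Icc (-a i) (a i)) :=
    MeasurableSet.univ_pi fun _ => measurableSet_Icc
  have hset : {x | ∀ i, |⟪b i, x⟫| ≤ a i} =
      b.repr ⁻¹' (WithLp.ofLp ⁻¹' Set.pi univ fun i => Icc (-a i) (a i)) := by
    ext x
    simp only [mem_preimage, Set.mem_pi, mem_univ, true_implies, mem_Icc, abs_le,
      b.repr_apply_apply]
    rfl
  rw [hset, b.measurePreserving_repr.measure_preimage
      (hbox.preimage (by fun_prop)).nullMeasurableSet,
    (PiLp.volume_preserving_ofLp ι).measure_preimage hbox.nullMeasurableSet, volume_pi_pi]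
  simp only [Real.volume_Icc, sub_neg_eq_add, two_mul]

theorem abs_inner_smul_add_smul_le {F : Type*} [NormedAddCommGroup F] [InnerProductSpace ℝ F]
    {u w z : F} (hu : ‖u‖ = 1) (hw : ‖w‖ = 1) (t r : ℝ) :
    |⟪u, t • w + r • z⟫| ≤ |t| + |r| * |⟪u, z⟫| := by
  have huw : |⟪u, w⟫| ≤ 1 := by simpa [hu, hw] using abs_real_inner_le_norm u w
  calc |⟪u, t • w + r • z⟫| ≤ |t| * |⟪u, w⟫| + |r| * |⟪u, z⟫| := by
        rw [inner_add_right, real_inner_smul_right, real_inner_smul_right, ← abs_mul, ← abs_mul]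
        exact abs_add_le _ _
    _ ≤ |t| + |r| * |⟪u, z⟫| := by nlinarith [abs_nonneg t]

theorem rpow_le_of_le_mul_eLpNorm_indicator_one {α : Type*} [MeasurableSpace α] {μ : Measure α}
    {E : Set α} (hE : MeasurableSet E) {X : ℝ≥0∞} {C p q : ℝ} (hp : 0 < p) (hq : 0 < q)
    (h : X ≤ ENNReal.ofReal C * eLpNorm (E.indicator fun _ => (1 : ℝ)) (ENNReal.ofReal p) μ) :
    X ^ q ≤ ENNReal.ofReal |C| ^ q * μ E ^ (q / p) := by
  rw [eLpNorm_indicator_const hE (by simpa using hp) ENNReal.ofReal_ne_top,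
    ENNReal.toReal_ofReal hp.le] at h
  calc X ^ q ≤ (ENNReal.ofReal |C| * μ E ^ (1 / p)) ^ q := by
        gcongr
        refine h.trans ?_
        gcongr
        · exact le_abs_self C
        · simp
    _ = ENNReal.ofReal |C| ^ q * μ E ^ (q / p) := by
        rw [ENNReal.mul_rpow_of_nonneg _ _ hq.le, ← ENNReal.rpow_mul, one_div_mul_eq_div]

theorem mul_measure_le_mixedNorm_rpow (lam : Measure Circ) {s q m : ℝ} (hs : 0 < s) (hq : 0 < q)
    {g : ℝ → Circ → ℝ} {S : Set Circ} (hS : MeasurableSet S)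
    (hg : ∀ ω ∈ S, m ≤ ∫ t in (-1 : ℝ)..1, |g t ω| ^ s) :
    ENNReal.ofReal m ^ (q / s) * lam S ≤ mixedNorm lam s q g ^ q := by
  rw [mixedNorm, ← ENNReal.rpow_mul, one_div_mul_cancel hq.ne', ENNReal.rpow_one,
    ← lintegral_indicator_const hS]
  refine lintegral_mono fun ω => ?_
  by_cases hω : ω ∈ S
  · rw [indicator_of_mem hω]
    exact ENNReal.rpow_le_rpow (ENNReal.ofReal_le_ofReal (hg ω hω)) (by positivity)
  · simp [indicator_of_notMem hω]

section Radon

variable (perp : Circ → Plane) (ω : Circ)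

theorem measurable_Rad_left {f : Plane → ℝ} (hf : Measurable f) :
    Measurable fun t => Rad perp f t ω := by
  have hline : StronglyMeasurable fun x : ℝ × ℝ => f (x.1 • (ω : Plane) + x.2 • perp ω) :=
    (hf.comp (by fun_prop)).stronglyMeasurable
  simpa only [Rad, intervalIntegral.integral_of_le (neg_one_lt_zero.trans zero_lt_one).le]
    using hline.integral_prod_right'.measurable

theorem abs_Rad_le {f : Plane → ℝ} {M : ℝ} (hM : ∀ x, |f x| ≤ M) (t : ℝ) :
    |Rad perp f t ω| ≤ 2 * M := by
  rw [← Real.norm_eq_abs]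
  calc ‖Rad perp f t ω‖ ≤ M * |1 - -1| :=
        intervalIntegral.norm_integral_le_of_norm_le_const fun r _ => hM _
    _ = 2 * M := by norm_num [mul_comm]

theorem Rad_indicator_eq_two {E : Set Plane} {t : ℝ}
    (hE : ∀ r ∈ Icc (-1 : ℝ) 1, t • (ω : Plane) + r • perp ω ∈ E) :
    Rad perp (E.indicator fun _ => 1) t ω = 2 := by
  rw [Rad, intervalIntegral.integral_congr (g := fun _ => (1 : ℝ)) fun r hr =>
    indicator_of_mem (hE r (by rwa [uIcc_of_le (by norm_num)] at hr)) _]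
  norm_num

theorem mul_le_integral_abs_Rad_rpow {f : Plane → ℝ} (hf : Measurable f) {M : ℝ}
    (hM : ∀ x, |f x| ≤ M) {s δ m : ℝ} (hs : 0 ≤ s) (hδ : 0 ≤ δ) (hδ1 : δ ≤ 1)
    (hm : ∀ t ∈ Icc (-δ) δ, m ≤ |Rad perp f t ω| ^ s) :
    m * (2 * δ) ≤ ∫ t in (-1 : ℝ)..1, |Rad perp f t ω| ^ s := by
  have hint : IntervalIntegrable (fun t => |Rad perp f t ω| ^ s) volume (-1) 1 := by
    refine (intervalIntegrable_iff_integrableOn_Ioc_of_le (by norm_num)).2 <|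
      Measure.integrableOn_of_bounded measure_Ioc_lt_top.ne
        ((measurable_Rad_left perp ω hf).abs.pow_const s).aestronglyMeasurable
        (M := (2 * M) ^ s) (Eventually.of_forall fun t => ?_)
    rw [Real.norm_of_nonneg (by positivity)]
    exact Real.rpow_le_rpow (abs_nonneg _) (abs_Rad_le perp ω hM t) hs
  calc m * (2 * δ) = ∫ _ in -δ..δ, m := by
        simp only [intervalIntegral.integral_const, sub_neg_eq_add, smul_eq_mul]; ring
    _ ≤ ∫ t in -δ..δ, |Rad perp f t ω| ^ s :=
      intervalIntegral.integral_mono_on (by linarith) intervalIntegrable_const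
        (hint.mono_set (uIcc_subset_uIcc (by rw [mem_uIcc]; left; constructor <;> linarith)
          (by rw [mem_uIcc]; left; constructor <;> linarith))) hm
    _ ≤ ∫ t in (-1 : ℝ)..1, |Rad perp f t ω| ^ s :=
      intervalIntegral.integral_mono_interval (by linarith) (by linarith) hδ1
        (Eventually.of_forall fun t => by positivity) hint

end Radon

theorem abs_inner_segment_le_of_mem_ball {perp : Circ → Plane}
    (hperp : ∀ ω, ‖perp ω‖ = 1 ∧ ⟪perp ω, (ω : Plane)⟫ = 0) {ω₀ ω : Circ} {δ t r : ℝ}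
    (hω : ω ∈ ball ω₀ δ) (ht : |t| ≤ δ) (hr : r ∈ Icc (-1 : ℝ) 1) :
    |⟪(ω₀ : Plane), t • (ω : Plane) + r • perp ω⟫| ≤ 2 * δ ∧
      |⟪perp ω₀, t • (ω : Plane) + r • perp ω⟫| ≤ δ + 1 := by
  have hr : |r| ≤ 1 := abs_le.2 hr
  have hω₀ : ‖(ω₀ : Plane)‖ = 1 := by simp
  have hω' : ‖(ω : Plane)‖ = 1 := by simp
  -- `perp ω ⊥ ω`, so `⟪ω₀, perp ω⟫ = ⟪ω₀ - ω, perp ω⟫` is at most `‖ω₀ - ω‖ < δ`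
  have hnear : |⟪(ω₀ : Plane), perp ω⟫| ≤ δ := by
    have hdist : ‖(ω₀ : Plane) - ω‖ < δ := by
      rw [← dist_eq_norm, dist_comm, ← Subtype.dist_eq]; exact hω
    have := abs_real_inner_le_norm ((ω₀ : Plane) - ω) (perp ω)
    rw [inner_sub_left, ← real_inner_comm (ω : Plane), (hperp ω).2, sub_zero, (hperp ω).1,
      mul_one] at this
    linarith
  have hfar : |⟪perp ω₀, perp ω⟫| ≤ 1 := by
    simpa [(hperp ω₀).1, (hperp ω).1] using abs_real_inner_le_norm (perp ω₀) (perp ω)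
  constructor
  · calc _ ≤ |t| + |r| * |⟪(ω₀ : Plane), perp ω⟫| := abs_inner_smul_add_smul_le hω₀ hω' t r
      _ ≤ δ + 1 * δ := by gcongr
      _ = 2 * δ := by ring
  · calc _ ≤ |t| + |r| * |⟪perp ω₀, perp ω⟫| := abs_inner_smul_add_smul_le (hperp ω₀).1 hω' t r
      _ ≤ δ + 1 * 1 := by gcongr
      _ = δ + 1 := by ring

def thinRectangle (b : OrthonormalBasis (Fin 2) ℝ Plane) (δ : ℝ) : Set Plane :=
  {x | ∀ i, |⟪b i, x⟫| ≤ ![2 * δ, 2] i}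

theorem measurableSet_thinRectangle (b : OrthonormalBasis (Fin 2) ℝ Plane) (δ : ℝ) :
    MeasurableSet (thinRectangle b δ) := by
  simp only [thinRectangle, ofPred_forall]
  exact MeasurableSet.iInter fun i => measurableSet_le (by fun_prop) measurable_const

theorem volume_thinRectangle (b : OrthonormalBasis (Fin 2) ℝ Plane) {δ : ℝ} (hδ : 0 ≤ δ) :
    volume (thinRectangle b δ) = ENNReal.ofReal (16 * δ) := by
  simp only [thinRectangle, b.volume_setOf_abs_inner_le, Fin.prod_univ_two,
    Matrix.cons_val_zero, Matrix.cons_val_one]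
  rw [← ENNReal.ofReal_mul (by positivity)]
  ring_nf

theorem rpow_mul_measure_ball_le_mixedNorm_Rad (lam : Measure Circ) {perp : Circ → Plane}
    (hperp : ∀ ω, ‖perp ω‖ = 1 ∧ ⟪perp ω, (ω : Plane)⟫ = 0) {ω₀ : Circ}
    {b : OrthonormalBasis (Fin 2) ℝ Plane} (hb : ⇑b = ![(ω₀ : Plane), perp ω₀])
    {s q δ : ℝ} (hs : 0 < s) (hq : 0 < q) (hδ : 0 < δ) (hδ1 : δ ≤ 1) :
    ENNReal.ofReal (2 ^ s * (2 * δ)) ^ (q / s) * lam (ball ω₀ δ) ≤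
      mixedNorm lam s q (fun t ω => Rad perp ((thinRectangle b δ).indicator fun _ => 1) t ω) ^ q := by
  refine mul_measure_le_mixedNorm_rpow lam hs hq measurableSet_ball fun ω hω => ?_
  refine mul_le_integral_abs_Rad_rpow perp ω
    (measurable_const.indicator (measurableSet_thinRectangle b δ)) (M := 1)
    (fun x => ?_) hs.le hδ.le hδ1 fun t ht => ?_
  · by_cases hx : x ∈ thinRectangle b δ <;> simp [hx]
  have hsegment : ∀ r ∈ Icc (-1 : ℝ) 1, t • (ω : Plane) + r • perp ω ∈ thinRectangle b δ := by
    intro r hr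
    obtain ⟨h₀, h₁⟩ := abs_inner_segment_le_of_mem_ball hperp hω (abs_le.2 ht) hr
    simp only [thinRectangle, mem_ofPred_eq, Fin.forall_fin_two, hb]
    exact ⟨h₀, by simpa using h₁.trans (by linarith)⟩
  rw [Rad_indicator_eq_two perp ω hsegment, abs_two]

theorem mul_rpow_le_of_mixedNorm_Rad_thinRectangle_le (lam : Measure Circ) {perp : Circ → Plane}
    (hperp : ∀ ω, ‖perp ω‖ = 1 ∧ ⟪perp ω, (ω : Plane)⟫ = 0) {ω₀ : Circ}
    {b : OrthonormalBasis (Fin 2) ℝ Plane} (hb : ⇑b = ![(ω₀ : Plane), perp ω₀])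
    {α p q s c C δ : ℝ} (hp : 0 < p) (hq : 0 < q) (hs : 0 < s) (hδ : 0 < δ) (hδ1 : δ ≤ 1)
    (hball : ENNReal.ofReal (c * δ ^ α) ≤ lam (ball ω₀ δ))
    (hest : mixedNorm lam s q (fun t ω => Rad perp ((thinRectangle b δ).indicator fun _ => 1) t ω)
      ≤ ENNReal.ofReal C *
        eLpNorm ((thinRectangle b δ).indicator fun _ => (1 : ℝ)) (ENNReal.ofReal p) volume) :
    (2 ^ s * 2) ^ (q / s) * c * δ ^ (q / s + α) ≤ |C| ^ q * 16 ^ (q / p) * δ ^ (q / p) := by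
  have hENN : ENNReal.ofReal ((2 ^ s * (2 * δ)) ^ (q / s) * (c * δ ^ α)) ≤
      ENNReal.ofReal (|C| ^ q * (16 * δ) ^ (q / p)) :=
    calc _ = ENNReal.ofReal (2 ^ s * (2 * δ)) ^ (q / s) * ENNReal.ofReal (c * δ ^ α) := by
          rw [ENNReal.ofReal_mul (by positivity),
            ENNReal.ofReal_rpow_of_nonneg (by positivity) (by positivity)]
      _ ≤ ENNReal.ofReal (2 ^ s * (2 * δ)) ^ (q / s) * lam (ball ω₀ δ) := by gcongr
      _ ≤ _ := rpow_mul_measure_ball_le_mixedNorm_Rad lam hperp hb hs hq hδ hδ1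
      _ ≤ ENNReal.ofReal |C| ^ q * volume (thinRectangle b δ) ^ (q / p) :=
          rpow_le_of_le_mul_eLpNorm_indicator_one (measurableSet_thinRectangle b δ) hp hq hest
      _ = ENNReal.ofReal (|C| ^ q * (16 * δ) ^ (q / p)) := by
          rw [volume_thinRectangle b hδ.le,
            ENNReal.ofReal_rpow_of_nonneg (by positivity) (by positivity),
            ENNReal.ofReal_rpow_of_nonneg (by positivity) (by positivity),
            ENNReal.ofReal_mul (by positivity)]
  convert (ENNReal.ofReal_le_ofReal_iff (by positivity)).1 hENN using 1
  · rw [Real.rpow_add hδ, show 2 ^ s * (2 * δ) = 2 ^ s * 2 * δ by ring,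
      Real.mul_rpow (by positivity) hδ.le]
    ring
  · rw [Real.mul_rpow (by positivity) hδ.le]
    ring

theorem stmt6_general (α : ℝ)
    (p q s : ℝ) (hp : 1 ≤ p) (hq : 1 ≤ q) (hs : 1 ≤ s)
    (lam : Measure Circ)
    (perp : Circ → Plane) (hperp : ∀ ω, ‖perp ω‖ = 1 ∧ (inner ℝ (perp ω) (ω : Plane) : ℝ) = 0)
    (ω₀ : Circ) (c : ℝ) (hc : 0 < c) (δ₀ : ℝ) (hδ₀ : 0 < δ₀)
    (hlower : ∀ δ : ℝ, 0 < δ → δ < δ₀ →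
      ENNReal.ofReal (c * δ ^ α) ≤ lam (Metric.ball ω₀ δ))
    (C : ℝ)
    (hest : ∀ f : Plane → ℝ, Measurable f →
      mixedNorm lam s q (fun t ω => Rad perp f t ω) ≤
        ENNReal.ofReal C * eLpNorm f (ENNReal.ofReal p) volume) :
    1 / p ≤ 1 / s + α / q := by
  have hp0 : 0 < p := by linarith
  have hq0 : 0 < q := by linarith
  have hs0 : 0 < s := by linarith
  obtain ⟨b, hb⟩ := exists_orthonormalBasis_fin_two finrank_euclideanSpace_fin
    (by simp : ‖(ω₀ : Plane)‖ = 1) (hperp ω₀).1 (by rw [real_inner_comm]; exact (hperp ω₀).2)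
  have hscale : ∀ δ ∈ Ioo 0 (min δ₀ 1),
      (2 ^ s * 2) ^ (q / s) * c * δ ^ (q / s + α) ≤ |C| ^ q * 16 ^ (q / p) * δ ^ (q / p) :=
    fun δ ⟨hδ, hδlt⟩ => mul_rpow_le_of_mixedNorm_Rad_thinRectangle_le lam hperp hb hp0 hq0 hs0 hδ
      (hδlt.trans_le (min_le_right _ _)).le (hlower δ hδ (hδlt.trans_le (min_le_left _ _)))
      (hest _ (measurable_const.indicator (measurableSet_thinRectangle b δ)))
  have hexp := le_of_eventually_mul_rpow_le (by positivity)
    (eventually_of_mem (Ioo_mem_nhdsGT (lt_min hδ₀ one_pos)) hscale)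
  calc 1 / p = q / p / q := by field_simp
    _ ≤ (q / s + α) / q := by gcongr
    _ = 1 / s + α / q := by field_simp

theorem stmt6 (α : ℝ) (hα : 0 < α) (hα1 : α < 1)
    (p q s : ℝ) (hp : 1 ≤ p) (hq : 1 ≤ q) (hs : 1 ≤ s)
    (lam : Measure Circ) [IsFiniteMeasure lam]
    (perp : Circ → Plane) (hperp : ∀ ω, ‖perp ω‖ = 1 ∧ (inner ℝ (perp ω) (ω : Plane) : ℝ) = 0)
    (ω₀ : Circ) (c : ℝ) (hc : 0 < c) (δ₀ : ℝ) (hδ₀ : 0 < δ₀)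
    (hlower : ∀ δ : ℝ, 0 < δ → δ < δ₀ →
      ENNReal.ofReal (c * δ ^ α) ≤ lam (Metric.ball ω₀ δ))
    (C : ℝ)
    (hest : ∀ f : Plane → ℝ, Measurable f →
      mixedNorm lam s q (fun t ω => Rad perp f t ω) ≤
        ENNReal.ofReal C * eLpNorm f (ENNReal.ofReal p) volume) :
    1 / p ≤ 1 / s + α / q :=
  stmt6_general α p q s hp hq hs lam perp hperp ω₀ c hc δ₀ hδ₀ hlower C hest
end
end

section
/- Let ν be a finite nonnegative Borel measure on ℝ^d satisfying ν(B(x,δ)) ≤ C δ^γ for all x, δ, with 0 < γ ≤ d, and let K_ρ(x) = |x|^{−ρ}χ_{B(0,R)}(x). Then for every p ∈ [1,∞] and every ε > 0, taking ρ = γ + (d−γ)/p − ε, the convolution ν ∗ K_ρ belongs to L^p(ℝ^d). -/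
/-!
A `γ`-Frostman measure `μ` has bounded potential `μ ∗ K_ρ` when `ρ < γ`: cutting `B(0, R)` into
dyadic annuli bounds it by a geometric series of ratio `2^(ρ - γ)`. Lebesgue measure is
`d`-Frostman, so `K_ρ ∈ L¹` for `ρ < d`, and then `ν ∗ K_ρ ∈ L¹` since `ν` is finite.
With `θ = 1/p`, `ρ₀ = γ - ε` and `ρ₁ = d - ε` one has `ρ = (1 - θ) ρ₀ + θ ρ₁`, and Hölder's
inequality gives `ν ∗ K_ρ ≤ (ν ∗ K_ρ₀)^(1-θ) (ν ∗ K_ρ₁)^θ ≤ M^(1-θ) (ν ∗ K_ρ₁)^θ`, whose `p`-th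
power is integrable.
-/

open MeasureTheory Metric Set
open scoped ENNReal

noncomputable section

abbrev Euc (d : ℕ) := EuclideanSpace ℝ (Fin d)

/-- The truncated Riesz kernel `K_ρ(x) = |x|^{-ρ} χ_{B(0,R)}(x)`. -/
def trKer (d : ℕ) (ρ R : ℝ) (x : Euc d) : ℝ :=
  (Metric.ball (0 : Euc d) R).indicator (fun z => ‖z‖ ^ (-ρ)) x

open Filter Topology Module

def IsFrostman {X : Type*} [PseudoMetricSpace X] [MeasurableSpace X] (μ : Measure X)
    (C γ : ℝ) : Prop :=
  ∀ (x : X) (δ : ℝ), 0 < δ → μ (ball x δ) ≤ ENNReal.ofReal (C * δ ^ γ)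

theorem IsFrostman.measure_singleton {X : Type*} [PseudoMetricSpace X] [MeasurableSpace X]
    {μ : Measure X} {C γ : ℝ} (h : IsFrostman μ C γ) (hγ : 0 < γ) (x : X) : μ {x} = 0 := by
  have hlim : Tendsto (fun δ : ℝ => ENNReal.ofReal (C * δ ^ γ)) (𝓝[>] 0) (𝓝 0) := by
    have : ContinuousAt (fun δ : ℝ => C * δ ^ γ) 0 :=
      continuousAt_const.mul (Real.continuousAt_rpow_const 0 γ (Or.inr hγ.le))
    simpa [Real.zero_rpow hγ.ne'] using (ENNReal.tendsto_ofReal this).mono_left nhdsWithin_le_nhds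
  refine le_antisymm (ge_of_tendsto hlim ?_) bot_le
  filter_upwards [self_mem_nhdsWithin] with δ hδ
  exact (measure_mono (singleton_subset_iff.2 (mem_ball_self hδ))).trans (h x δ hδ)

theorem isFrostman_addHaar {E : Type*} [NormedAddCommGroup E] [NormedSpace ℝ E]
    [MeasurableSpace E] [BorelSpace E] [FiniteDimensional ℝ E] (μ : Measure E)
    [μ.IsAddHaarMeasure] : IsFrostman μ (μ (ball 0 1)).toReal (finrank ℝ E) := by
  intro x δ hδ
  rw [Measure.addHaar_ball_of_pos μ x hδ, Real.rpow_natCast, mul_comm,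
    ENNReal.ofReal_mul ENNReal.toReal_nonneg, ENNReal.ofReal_toReal measure_ball_lt_top.ne]

theorem lintegral_indicator_ball_zero_sub {E : Type*} [SeminormedAddCommGroup E]
    [MeasurableSpace E] [OpensMeasurableSpace E] (μ : Measure E) (x : E) (r : ℝ) (c : ℝ≥0∞) :
    ∫⁻ y, (ball (0 : E) r).indicator (fun _ => c) (x - y) ∂μ = c * μ (ball x r) := by
  calc ∫⁻ y, (ball (0 : E) r).indicator (fun _ => c) (x - y) ∂μ
      = ∫⁻ y, (ball x r).indicator (fun _ => c) y ∂μ := by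
        refine lintegral_congr fun y => ?_
        simp only [indicator, mem_ball, dist_eq_norm, sub_zero, norm_sub_rev]
    _ = c * μ (ball x r) := lintegral_indicator_const measurableSet_ball c

section Kernel

variable {d : ℕ} {ρ R : ℝ}

theorem measurable_trKer : Measurable (trKer d ρ R) :=
  (measurable_norm.pow_const _).indicator measurableSet_ball

theorem ofReal_trKer_le_indicator_of_nonpos (hρ : ρ ≤ 0) (z : Euc d) :
    ENNReal.ofReal (trKer d ρ R z)
      ≤ (ball (0 : Euc d) R).indicator (fun _ => ENNReal.ofReal (R ^ (-ρ))) z := by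
  by_cases hz : z ∈ ball (0 : Euc d) R
  · rw [trKer, indicator_of_mem hz, indicator_of_mem hz]
    exact ENNReal.ofReal_le_ofReal <|
      Real.rpow_le_rpow (norm_nonneg z) (mem_ball_zero_iff.1 hz).le (neg_nonneg.2 hρ)
  · simp [trKer, hz]

/-- On the annulus `R 2⁻ⁿ⁻¹ < ‖z‖ ≤ R 2⁻ⁿ` the `n`-th term dominates; the radius is `2 R 2⁻ⁿ`
so that this half-closed annulus lies in the open ball. -/
theorem ofReal_trKer_le_tsum (hρ : 0 < ρ) (z : Euc d) :
    ENNReal.ofReal (trKer d ρ R z) ≤ ∑' n : ℕ, (ball (0 : Euc d) (2 * R * 2⁻¹ ^ n)).indicator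
      (fun _ => ENNReal.ofReal ((R * 2⁻¹ ^ (n + 1)) ^ (-ρ))) z := by
  by_cases hz : z ∈ ball (0 : Euc d) R
  swap
  · simp [trKer, hz]
  rcases eq_or_ne z 0 with rfl | hz0
  · rw [trKer, indicator_of_mem hz, norm_zero, Real.zero_rpow (neg_ne_zero.2 hρ.ne'),
      ENNReal.ofReal_zero]
    exact zero_le
  have hzR : ‖z‖ < R := mem_ball_zero_iff.1 hz
  have hz0' : 0 < ‖z‖ := norm_pos_iff.2 hz0
  have hR : 0 < R := hz0'.trans hzR
  obtain ⟨n, hlow, hup⟩ := exists_nat_pow_near_of_lt_one (div_pos hz0' hR)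
    ((div_le_one hR).2 hzR.le) (by norm_num : (0 : ℝ) < 2⁻¹) (by norm_num)
  rw [lt_div_iff₀ hR, mul_comm] at hlow
  rw [div_le_iff₀ hR, mul_comm] at hup
  refine le_trans ?_ (ENNReal.le_tsum n)
  rw [trKer, indicator_of_mem hz, indicator_of_mem (mem_ball_zero_iff.2 (by nlinarith [hz0']))]
  exact ENNReal.ofReal_le_ofReal <|
    Real.rpow_le_rpow_of_nonpos (by positivity) hlow.le (neg_nonpos.2 hρ.le)

end Kernel

def trKerConv (d : ℕ) (ρ R : ℝ) (μ : Measure (Euc d)) (x : Euc d) : ℝ≥0∞ :=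
  ∫⁻ y, ENNReal.ofReal (trKer d ρ R (x - y)) ∂μ

section Conv

variable {d : ℕ} {ρ R : ℝ}

theorem measurable_trKerConv (μ : Measure (Euc d)) [SFinite μ] :
    Measurable (trKerConv d ρ R μ) :=
  Measurable.lintegral_prod_right
    (measurable_trKer.comp (measurable_fst.sub measurable_snd)).ennreal_ofReal

theorem trKerConv_volume (x : Euc d) :
    trKerConv d ρ R volume x = ∫⁻ z, ENNReal.ofReal (trKer d ρ R z) :=
  lintegral_sub_left_eq_self (fun z => ENNReal.ofReal (trKer d ρ R z)) x

theorem lintegral_trKerConv (ν : Measure (Euc d)) [SFinite ν] :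
    ∫⁻ x, trKerConv d ρ R ν x = ν univ * ∫⁻ z, ENNReal.ofReal (trKer d ρ R z) := by
  simp only [trKerConv]
  rw [lintegral_lintegral_swap
    (measurable_trKer.comp (measurable_fst.sub measurable_snd)).ennreal_ofReal.aemeasurable]
  simp_rw [lintegral_sub_right_eq_self (fun z => ENNReal.ofReal (trKer d ρ R z)),
    lintegral_const, mul_comm]

theorem IsFrostman.trKerConv_le {μ : Measure (Euc d)} {C γ : ℝ} (h : IsFrostman μ C γ)
    (hρ : ρ < γ) (hR : 0 < R) : ∃ M, M ≠ ∞ ∧ ∀ x, trKerConv d ρ R μ x ≤ M := by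
  rcases le_or_gt ρ 0 with hρ0 | hρ0
  · refine ⟨ENNReal.ofReal (R ^ (-ρ)) * ENNReal.ofReal (C * R ^ γ), by finiteness, fun x => ?_⟩
    calc trKerConv d ρ R μ x
        ≤ ∫⁻ y, (ball (0 : Euc d) R).indicator (fun _ => ENNReal.ofReal (R ^ (-ρ))) (x - y) ∂μ :=
          lintegral_mono fun y => ofReal_trKer_le_indicator_of_nonpos hρ0 _
      _ = ENNReal.ofReal (R ^ (-ρ)) * μ (ball x R) := lintegral_indicator_ball_zero_sub μ x R _
      _ ≤ _ := by gcongr; exact h x R hR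
  set a : ℝ := 2⁻¹
  set A : ℝ := C * (R * a) ^ (-ρ) * (2 * R) ^ γ
  set q : ℝ := a ^ (γ - ρ)
  have hq : ENNReal.ofReal q < 1 := ENNReal.ofReal_lt_one.2 <|
    Real.rpow_lt_one (by norm_num) (by norm_num) (by linarith)
  have hterm : ∀ n : ℕ, (R * a ^ (n + 1)) ^ (-ρ) * (C * (2 * R * a ^ n) ^ γ) = A * q ^ n := by
    intro n
    have hs : 0 < a ^ n := by positivity
    rw [pow_succ, show R * (a ^ n * a) = R * a * a ^ n by ring, Real.mul_rpow (by positivity)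
      hs.le, Real.mul_rpow (by positivity) hs.le, Real.rpow_pow_comm (by norm_num)]
    have : (a ^ n) ^ (-ρ) * (a ^ n) ^ γ = (a ^ n) ^ (γ - ρ) := by
      rw [← Real.rpow_add hs]; ring_nf
    linear_combination C * (R * a) ^ (-ρ) * (2 * R) ^ γ * this
  refine ⟨ENNReal.ofReal A * (1 - ENNReal.ofReal q)⁻¹,
    ENNReal.mul_ne_top ENNReal.ofReal_ne_top (ENNReal.inv_ne_top.2 (tsub_pos_of_lt hq).ne'),
    fun x => ?_⟩
  calc trKerConv d ρ R μ x
      ≤ ∫⁻ y, ∑' n : ℕ, (ball (0 : Euc d) (2 * R * a ^ n)).indicator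
          (fun _ => ENNReal.ofReal ((R * a ^ (n + 1)) ^ (-ρ))) (x - y) ∂μ :=
        lintegral_mono fun y => ofReal_trKer_le_tsum hρ0 _
    _ = ∑' n : ℕ, ENNReal.ofReal ((R * a ^ (n + 1)) ^ (-ρ)) * μ (ball x (2 * R * a ^ n)) := by
        refine (lintegral_tsum fun n => ?_).trans ?_
        · exact ((measurable_const.indicator measurableSet_ball).comp
            (measurable_const.sub measurable_id)).aemeasurable
        simp_rw [lintegral_indicator_ball_zero_sub]
    _ ≤ ∑' n : ℕ, ENNReal.ofReal A * ENNReal.ofReal q ^ n := by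
        refine ENNReal.tsum_le_tsum fun n => ?_
        grw [h x _ (by positivity), ← ENNReal.ofReal_mul (by positivity), hterm,
          ENNReal.ofReal_mul' (by positivity), ENNReal.ofReal_pow (by positivity)]
    _ = _ := by rw [ENNReal.tsum_mul_left, ENNReal.tsum_geometric]

theorem lintegral_trKerConv_lt_top (ν : Measure (Euc d)) [IsFiniteMeasure ν] (hρ : ρ < d)
    (hR : 0 < R) : ∫⁻ x, trKerConv d ρ R ν x < ∞ := by
  have hvol := isFrostman_addHaar (volume : Measure (Euc d))
  rw [finrank_euclideanSpace_fin] at hvol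
  obtain ⟨M, hM, hbound⟩ := hvol.trKerConv_le hρ hR
  rw [lintegral_trKerConv, ← trKerConv_volume 0]
  exact ENNReal.mul_lt_top (measure_lt_top ν _) ((hbound 0).trans_lt hM.lt_top)

theorem ofReal_trKer_interpolate {ρ₀ ρ₁ θ : ℝ} (hθ₀ : 0 ≤ θ) (hθ₁ : θ ≤ 1) {z : Euc d}
    (hz : z ≠ 0) : ENNReal.ofReal (trKer d ((1 - θ) * ρ₀ + θ * ρ₁) R z)
      = ENNReal.ofReal (trKer d ρ₀ R z) ^ (1 - θ) * ENNReal.ofReal (trKer d ρ₁ R z) ^ θ := by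
  by_cases hzR : z ∈ ball (0 : Euc d) R
  · have hz' : 0 < ‖z‖ := norm_pos_iff.2 hz
    simp only [trKer, indicator_of_mem hzR]
    rw [ENNReal.ofReal_rpow_of_pos (by positivity), ENNReal.ofReal_rpow_of_pos (by positivity),
      ← ENNReal.ofReal_mul (by positivity), ← Real.rpow_mul hz'.le, ← Real.rpow_mul hz'.le,
      ← Real.rpow_add hz']
    ring_nf
  · rcases hθ₀.eq_or_lt with rfl | hθ
    · simp [trKer, hzR]
    · simp [trKer, hzR, ENNReal.zero_rpow_of_pos hθ]

/-- Hölder's inequality with exponents `1/(1-θ)` and `1/θ`, applied to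
`K_ρ = K_ρ₀^(1-θ) K_ρ₁^θ`; this identity fails at the origin, hence the atomlessness. -/
theorem trKerConv_le_rpow_mul_rpow {ν : Measure (Euc d)} (hν : ∀ x, ν {x} = 0)
    {ρ₀ ρ₁ θ : ℝ} (hθ₀ : 0 ≤ θ) (hθ₁ : θ ≤ 1) (x : Euc d) :
    trKerConv d ((1 - θ) * ρ₀ + θ * ρ₁) R ν x
      ≤ trKerConv d ρ₀ R ν x ^ (1 - θ) * trKerConv d ρ₁ R ν x ^ θ := by
  have hmeas : ∀ ρ', AEMeasurable (fun y => ENNReal.ofReal (trKer d ρ' R (x - y))) ν :=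
    fun ρ' => (measurable_trKer.comp (measurable_const.sub measurable_id)).ennreal_ofReal
      |>.aemeasurable
  calc trKerConv d ((1 - θ) * ρ₀ + θ * ρ₁) R ν x
      = ∫⁻ y, ENNReal.ofReal (trKer d ρ₀ R (x - y)) ^ (1 - θ)
          * ENNReal.ofReal (trKer d ρ₁ R (x - y)) ^ θ ∂ν := by
        refine lintegral_congr_ae ?_
        filter_upwards [measure_eq_zero_iff_ae_notMem.1 (hν x)] with y hy
        exact ofReal_trKer_interpolate hθ₀ hθ₁ (sub_ne_zero.2 (Ne.symm hy))
    _ ≤ _ := ENNReal.lintegral_mul_norm_pow_le (hmeas ρ₀) (hmeas ρ₁) (by linarith) hθ₀ (by ring)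

end Conv

theorem memLp_of_le_rpow_mul_rpow {α : Type*} [MeasurableSpace α] {μ : Measure α}
    {f g : α → ℝ≥0∞} {p M : ℝ≥0∞} (hp : 1 ≤ p) (hp_top : p ≠ ∞) (hf : AEStronglyMeasurable f μ)
    (hM : M ≠ ∞) (hg : ∫⁻ x, g x ∂μ < ∞)
    (hfg : ∀ x, f x ≤ M ^ (1 - p.toReal⁻¹) * g x ^ p.toReal⁻¹) : MemLp f p μ := by
  have hp₁ : 1 ≤ p.toReal := by simpa using ENNReal.toReal_mono hp_top hp
  have hpow : ∀ x, f x ^ p.toReal ≤ M ^ (p.toReal - 1) * g x := fun x => by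
    grw [hfg x, ENNReal.mul_rpow_of_nonneg _ _ (by linarith), ← ENNReal.rpow_mul,
      ← ENNReal.rpow_mul, inv_mul_cancel₀ (by linarith), ENNReal.rpow_one, sub_mul,
      inv_mul_cancel₀ (by linarith), one_mul]
  refine ⟨hf, (eLpNorm_lt_top_iff_lintegral_rpow_enorm_lt_top
    (zero_lt_one.trans_le hp).ne' hp_top).2 ?_⟩
  calc ∫⁻ x, ‖f x‖ₑ ^ p.toReal ∂μ ≤ ∫⁻ x, M ^ (p.toReal - 1) * g x ∂μ :=
        lintegral_mono fun x => by simpa using hpow x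
    _ = M ^ (p.toReal - 1) * ∫⁻ x, g x ∂μ :=
        lintegral_const_mul' _ _ (ENNReal.rpow_ne_top_of_nonneg (by linarith) hM)
    _ < ∞ := ENNReal.mul_lt_top (ENNReal.rpow_lt_top_of_nonneg (by linarith) hM) hg

theorem stmt11_general (d : ℕ) (ν : Measure (Euc d)) [IsFiniteMeasure ν]
    (C γ : ℝ) (hγ : 0 < γ)
    (hfrost : ∀ (x : Euc d) (δ : ℝ), 0 < δ →
      ν (Metric.ball x δ) ≤ ENNReal.ofReal (C * δ ^ γ))
    (R : ℝ) (hR : 0 < R) (p : ℝ≥0∞) (hp : 1 ≤ p) (ε : ℝ) (hε : 0 < ε)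
    (ρ : ℝ) (hρ : ρ = γ + ((d : ℝ) - γ) * (p⁻¹).toReal - ε) :
    MemLp (fun x : Euc d => (∫⁻ y, ENNReal.ofReal (trKer d ρ R (x - y)) ∂ν).toReal)
      p volume := by
  have hν : IsFrostman ν C γ := hfrost
  obtain ⟨M, hM, hbound⟩ := hν.trKerConv_le (ρ := γ - ε) (by linarith) hR
  have hmeas := measurable_trKerConv (ρ := ρ) (R := R) ν
  suffices MemLp (trKerConv d ρ R ν) p volume from
    this.of_le_enorm hmeas.ennreal_toReal.aestronglyMeasurable <| ae_of_all _ fun x => by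
      rw [Real.enorm_eq_ofReal ENNReal.toReal_nonneg, enorm_eq_self]
      exact ENNReal.ofReal_toReal_le
  rcases eq_or_ne p ∞ with rfl | hp_top
  · simp only [ENNReal.inv_top, ENNReal.toReal_zero, mul_zero, add_zero] at hρ
    subst hρ
    exact memLp_top_of_bound_enorm hmeas.aestronglyMeasurable M.toNNReal
      (ae_of_all _ fun x => by simpa [ENNReal.coe_toNNReal hM] using hbound x)
  set θ := p.toReal⁻¹
  have hθ₀ : 0 ≤ θ := by positivity
  have hθ₁ : θ ≤ 1 := inv_le_one_of_one_le₀ (by simpa using ENNReal.toReal_mono hp_top hp)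
  have hρθ : ρ = (1 - θ) * (γ - ε) + θ * (d - ε) := by rw [hρ, ENNReal.toReal_inv]; ring
  refine memLp_of_le_rpow_mul_rpow hp hp_top hmeas.aestronglyMeasurable hM
    (lintegral_trKerConv_lt_top ν (ρ := d - ε) (by linarith) hR) fun x => ?_
  grw [hρθ, trKerConv_le_rpow_mul_rpow (hν.measure_singleton hγ) hθ₀ hθ₁, hbound x]
  linarith

theorem stmt11 (d : ℕ) (hd : 0 < d) (ν : Measure (Euc d)) [IsFiniteMeasure ν]
    (C γ : ℝ) (hγ : 0 < γ) (hγd : γ ≤ d)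
    (hfrost : ∀ (x : Euc d) (δ : ℝ), 0 < δ →
      ν (Metric.ball x δ) ≤ ENNReal.ofReal (C * δ ^ γ))
    (R : ℝ) (hR : 0 < R) (p : ℝ≥0∞) (hp : 1 ≤ p) (ε : ℝ) (hε : 0 < ε)
    (ρ : ℝ) (hρ : ρ = γ + ((d : ℝ) - γ) * (p⁻¹).toReal - ε) :
    MemLp (fun x : Euc d => (∫⁻ y, ENNReal.ofReal (trKer d ρ R (x - y)) ∂ν).toReal)
      p volume :=
  stmt11_general d ν C γ hγ hfrost R hR p hp ε hε ρ hρ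
end
end

section
/- Let 0 < α ≤ β ≤ 1, let μ be a finite nonnegative compactly supported Borel measure on ℝ² with finite (α−ε)-energy, and let λ be a finite Borel measure on S¹ with λ(B(ω,δ)) ≤ Cδ^α. Then ∫_{S¹} I_{α−ε}(μ_ω) dλ(ω) ≤ C(ε)·I_{α−ε}(μ), where I_s(ν) = ∬ |y₁−y₂|^{−s} dν(y₁)dν(y₂) and μ_ω is the projection of μ in direction ω. -/
open MeasureTheory Metric Set
open scoped ENNReal

noncomputable section

/-!
Write `s = α - ε`. By Tonelli the integral over directions can be taken innermost, so it
suffices to bound `∫ |⟪x₁ - x₂, ω⟫|^(-s) dλ(ω)` by a multiple of `‖x₁ - x₂‖^(-s)`, and by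
homogeneity only unit vectors `e` matter. A unit `ω` with `|⟪e, ω⟫| < r` lies within `2r` of
`±Je`, where `J` is the rotation by a right angle, so the Frostman condition gives
`λ {|⟪e, ω⟫|^(-s) > t} ≲ t^(-α/s)`. Since `s < α` this tail is integrable at infinity, and the
layer-cake formula bounds the integral uniformly in `e`.
-/

open scoped InnerProductSpace EuclideanSpace

theorem lintegral_ofReal_le_measure_univ_add_of_meas_lt_le_rpow {X : Type*} [MeasurableSpace X]
    (μ : Measure X) {f : X → ℝ} (hf₀ : 0 ≤ᵐ[μ] f) (hf : AEMeasurable f μ) {K : ℝ≥0∞} {p : ℝ}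
    (hp : 1 < p) (htail : ∀ t : ℝ, 1 < t → μ {x | t < f x} ≤ K * ENNReal.ofReal (t ^ (-p))) :
    ∫⁻ x, ENNReal.ofReal (f x) ∂μ ≤ μ univ + K * ENNReal.ofReal (p - 1)⁻¹ := by
  rw [lintegral_eq_lintegral_meas_lt μ hf₀ hf, ← Ioc_union_Ioi_eq_Ioi zero_le_one,
    lintegral_union measurableSet_Ioi (Ioc_disjoint_Ioi le_rfl)]
  gcongr
  · calc ∫⁻ t in Ioc 0 1, μ {x | t < f x}
        ≤ ∫⁻ _ in Ioc (0 : ℝ) 1, μ univ := lintegral_mono fun _ ↦ measure_mono (subset_univ _)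
      _ = μ univ := by simp
  · have hint : ∫ t in Ioi (1 : ℝ), t ^ (-p) = (p - 1)⁻¹ := by
      rw [integral_Ioi_rpow_of_lt (by linarith) one_pos, Real.one_rpow,
        show -p + 1 = -(p - 1) by ring, div_neg, neg_div, neg_neg, one_div]
    calc ∫⁻ t in Ioi 1, μ {x | t < f x}
        ≤ ∫⁻ t in Ioi (1 : ℝ), K * ENNReal.ofReal (t ^ (-p)) :=
          setLIntegral_mono' measurableSet_Ioi htail
      _ = K * ENNReal.ofReal (p - 1)⁻¹ := by
        rw [lintegral_const_mul _ (by fun_prop), ← hint, ofReal_integral_eq_lintegral_ofReal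
          (integrableOn_Ioi_rpow_of_lt (by linarith) one_pos)]
        exact (ae_restrict_iff' measurableSet_Ioi).2 (.of_forall fun t ht ↦
          Real.rpow_nonneg (zero_le_one.trans ht.le) _)

namespace Orientation

variable {E : Type*} [NormedAddCommGroup E] [InnerProductSpace ℝ E] [Fact (Module.finrank ℝ E = 2)]
  (o : Orientation ℝ E (Fin 2))

theorem norm_sub_or_add_rightAngleRotation_lt_of_abs_inner_lt {e ω : E} (he : ‖e‖ = 1)
    (hω : ‖ω‖ = 1) {r : ℝ} (h : |⟪e, ω⟫_ℝ| < r) :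
    ‖ω - o.rightAngleRotation e‖ < 2 * r ∨ ‖ω + o.rightAngleRotation e‖ < 2 * r := by
  have hr : 0 < r := (abs_nonneg _).trans_lt h
  have hJe : ‖o.rightAngleRotation e‖ = 1 := by simp [he]
  have hpyth : ⟪e, ω⟫_ℝ ^ 2 + ⟪o.rightAngleRotation e, ω⟫_ℝ ^ 2 = 1 := by
    rw [o.inner_rightAngleRotation_left, o.inner_sq_add_areaForm_sq, he, hω]; norm_num
  have hc : ⟪e, ω⟫_ℝ ^ 2 < r ^ 2 := by
    rw [← sq_abs]; exact pow_lt_pow_left₀ h (abs_nonneg _) two_ne_zero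
  rcases le_total 0 ⟪o.rightAngleRotation e, ω⟫_ℝ with hd | hd
  · left
    refine lt_of_pow_lt_pow_left₀ 2 (by positivity) ?_
    rw [norm_sub_sq_real, hω, hJe, real_inner_comm]
    nlinarith
  · right
    refine lt_of_pow_lt_pow_left₀ 2 (by positivity) ?_
    rw [norm_add_sq_real, hω, hJe, real_inner_comm]
    nlinarith

end Orientation

section FrostmanOnCircle

variable {E : Type*} [NormedAddCommGroup E] [InnerProductSpace ℝ E] [Fact (Module.finrank ℝ E = 2)]
  [MeasurableSpace E] {lam : Measure (sphere (0 : E) 1)} {α C : ℝ}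

attribute [local instance] FiniteDimensional.of_fact_finrank_eq_two

theorem measure_abs_inner_lt_le
    (hlam : ∀ (ω : sphere (0 : E) 1) (δ : ℝ), 0 < δ → lam (ball ω δ) ≤ ENNReal.ofReal (C * δ ^ α))
    {e : E} (he : ‖e‖ = 1) {r : ℝ} (hr : 0 < r) :
    lam {ω | |⟪e, (ω : E)⟫_ℝ| < r} ≤ 2 * ENNReal.ofReal (C * (2 * r) ^ α) := by
  let o : Orientation ℝ E (Fin 2) := (Module.finBasisOfFinrankEq ℝ E Fact.out).orientation
  have hJe : o.rightAngleRotation e ∈ sphere (0 : E) 1 := by simp [he]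
  have hJe' : -o.rightAngleRotation e ∈ sphere (0 : E) 1 := by simp [he]
  have hcover : {ω : sphere (0 : E) 1 | |⟪e, (ω : E)⟫_ℝ| < r} ⊆
      ball ⟨_, hJe⟩ (2 * r) ∪ ball ⟨_, hJe'⟩ (2 * r) := by
    intro ω hω
    simpa [Subtype.dist_eq, dist_eq_norm] using
      o.norm_sub_or_add_rightAngleRotation_lt_of_abs_inner_lt he (norm_eq_of_mem_sphere ω) hω
  calc lam {ω | |⟪e, (ω : E)⟫_ℝ| < r}
      ≤ lam (ball ⟨_, hJe⟩ (2 * r)) + lam (ball ⟨_, hJe'⟩ (2 * r)) :=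
        (measure_mono hcover).trans (measure_union_le _ _)
    _ ≤ 2 * ENNReal.ofReal (C * (2 * r) ^ α) := by
      rw [two_mul (ENNReal.ofReal _)]
      exact add_le_add (hlam _ _ (mul_pos two_pos hr)) (hlam _ _ (mul_pos two_pos hr))

theorem measure_lt_abs_inner_rpow_neg_le
    (hlam : ∀ (ω : sphere (0 : E) 1) (δ : ℝ), 0 < δ → lam (ball ω δ) ≤ ENNReal.ofReal (C * δ ^ α))
    {e : E} (he : ‖e‖ = 1) {s : ℝ} (hs : 0 < s) {t : ℝ} (ht : 0 < t) :
    lam {ω | t < |⟪e, (ω : E)⟫_ℝ| ^ (-s)} ≤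
      2 * ENNReal.ofReal (C * 2 ^ α) * ENNReal.ofReal (t ^ (-(α / s))) := by
  set r := t ^ (-s⁻¹)
  have hr : 0 < r := Real.rpow_pos_of_pos ht _
  have hsub : {ω : sphere (0 : E) 1 | t < |⟪e, (ω : E)⟫_ℝ| ^ (-s)} ⊆
      {ω | |⟪e, (ω : E)⟫_ℝ| < r} := by
    intro ω hω
    simp only [mem_ofPred_eq] at hω ⊢
    by_contra! hle
    have hrs : r ^ (-s) = t := by
      rw [← Real.rpow_mul ht.le, neg_mul_neg, inv_mul_cancel₀ hs.ne', Real.rpow_one]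
    exact hω.not_ge (hrs ▸ Real.rpow_le_rpow_of_nonpos hr hle (neg_nonpos.2 hs.le))
  have hr_pow : (2 * r) ^ α = 2 ^ α * t ^ (-(α / s)) := by
    rw [Real.mul_rpow zero_le_two hr.le, ← Real.rpow_mul ht.le, neg_mul, inv_mul_eq_div]
  calc lam {ω | t < |⟪e, (ω : E)⟫_ℝ| ^ (-s)}
      ≤ 2 * ENNReal.ofReal (C * (2 * r) ^ α) :=
        (measure_mono hsub).trans (measure_abs_inner_lt_le hlam he hr)
    _ = 2 * ENNReal.ofReal (C * 2 ^ α) * ENNReal.ofReal (t ^ (-(α / s))) := by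
      rw [hr_pow, ← mul_assoc, ENNReal.ofReal_mul' (Real.rpow_nonneg ht.le _), mul_assoc]

theorem lintegral_abs_inner_rpow_neg_le [OpensMeasurableSpace E]
    (hlam : ∀ (ω : sphere (0 : E) 1) (δ : ℝ), 0 < δ → lam (ball ω δ) ≤ ENNReal.ofReal (C * δ ^ α))
    {e : E} (he : ‖e‖ = 1) {s : ℝ} (hs : 0 < s) (hsα : s < α) :
    ∫⁻ ω, ENNReal.ofReal (|⟪e, (ω : E)⟫_ℝ| ^ (-s)) ∂lam ≤
      lam univ + 2 * ENNReal.ofReal (C * 2 ^ α) * ENNReal.ofReal (α / s - 1)⁻¹ := by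
  have hmeas : Measurable fun ω : sphere (0 : E) 1 ↦ |⟪e, (ω : E)⟫_ℝ| ^ (-s) := by fun_prop
  exact lintegral_ofReal_le_measure_univ_add_of_meas_lt_le_rpow lam
    (.of_forall fun _ ↦ Real.rpow_nonneg (abs_nonneg _) _) hmeas.aemeasurable
    ((one_lt_div hs).2 hsα) fun t ht ↦
      measure_lt_abs_inner_rpow_neg_le hlam he hs (one_pos.trans ht)

end FrostmanOnCircle

section ProjectedEnergy

variable {X E : Type*} [MeasurableSpace X] [NormedAddCommGroup E] [InnerProductSpace ℝ E]
  {lam : Measure X} {g : X → E} {s : ℝ} {A : ℝ≥0∞}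

theorem lintegral_abs_inner_rpow_neg_le_of_norm_eq_one (hs : s ≠ 0)
    (hA : ∀ e : E, ‖e‖ = 1 → ∫⁻ ω, ENNReal.ofReal (|⟪e, g ω⟫_ℝ| ^ (-s)) ∂lam ≤ A) (v : E) :
    ∫⁻ ω, ENNReal.ofReal (|⟪v, g ω⟫_ℝ| ^ (-s)) ∂lam ≤ A * ENNReal.ofReal (‖v‖ ^ (-s)) := by
  rcases eq_or_ne v 0 with rfl | hv
  · -- `0 ^ (-s) = 0` in Lean, so both sides vanish
    simp [Real.zero_rpow (neg_ne_zero.2 hs)]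
  set e := ‖v‖⁻¹ • v
  have he : ‖e‖ = 1 := norm_smul_inv_norm hv
  have hve : v = ‖v‖ • e := by simp [e, smul_smul, hv]
  calc ∫⁻ ω, ENNReal.ofReal (|⟪v, g ω⟫_ℝ| ^ (-s)) ∂lam
      = ∫⁻ ω, ENNReal.ofReal (‖v‖ ^ (-s)) * ENNReal.ofReal (|⟪e, g ω⟫_ℝ| ^ (-s)) ∂lam := by
        refine lintegral_congr fun ω ↦ ?_
        rw [← ENNReal.ofReal_mul (by positivity), ← Real.mul_rpow (norm_nonneg _) (abs_nonneg _),
          ← abs_norm, ← abs_mul, ← real_inner_smul_left, ← hve]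
    _ = ENNReal.ofReal (‖v‖ ^ (-s)) * ∫⁻ ω, ENNReal.ofReal (|⟪e, g ω⟫_ℝ| ^ (-s)) ∂lam :=
        lintegral_const_mul' _ _ ENNReal.ofReal_ne_top
    _ ≤ A * ENNReal.ofReal (‖v‖ ^ (-s)) := by rw [mul_comm]; gcongr; exact hA e he

theorem lintegral_projected_energy_le [MeasurableSpace E] [OpensMeasurableSpace E]
    [SecondCountableTopology E] [SFinite lam] (hg : Measurable g) (μ : Measure E) [SFinite μ]
    (hA : ∀ v : E, ∫⁻ ω, ENNReal.ofReal (|⟪v, g ω⟫_ℝ| ^ (-s)) ∂lam ≤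
      A * ENNReal.ofReal (‖v‖ ^ (-s))) :
    ∫⁻ ω, ∫⁻ x₁, ∫⁻ x₂, ENNReal.ofReal (|⟪x₁, g ω⟫_ℝ - ⟪x₂, g ω⟫_ℝ| ^ (-s)) ∂μ ∂μ ∂lam ≤
      A * ∫⁻ x₁, ∫⁻ x₂, ENNReal.ofReal (‖x₁ - x₂‖ ^ (-s)) ∂μ ∂μ := by
  have hF : Measurable fun p : (X × E) × E ↦
      ENNReal.ofReal (|⟪p.1.2, g p.1.1⟫_ℝ - ⟪p.2, g p.1.1⟫_ℝ| ^ (-s)) := by fun_prop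
  have hF₁ : ∀ x₁ : E, Measurable fun p : X × E ↦
      ENNReal.ofReal (|⟪x₁, g p.1⟫_ℝ - ⟪p.2, g p.1⟫_ℝ| ^ (-s)) := fun _ ↦ by fun_prop
  calc ∫⁻ ω, ∫⁻ x₁, ∫⁻ x₂, ENNReal.ofReal (|⟪x₁, g ω⟫_ℝ - ⟪x₂, g ω⟫_ℝ| ^ (-s)) ∂μ ∂μ ∂lam
      = ∫⁻ x₁, ∫⁻ x₂, ∫⁻ ω, ENNReal.ofReal (|⟪x₁ - x₂, g ω⟫_ℝ| ^ (-s)) ∂lam ∂μ ∂μ := by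
        rw [lintegral_lintegral_swap hF.lintegral_prod_right'.aemeasurable]
        refine lintegral_congr fun x₁ ↦ ?_
        rw [lintegral_lintegral_swap (hF₁ x₁).aemeasurable]
        simp only [inner_sub_left]
    _ ≤ ∫⁻ x₁, ∫⁻ x₂, A * ENNReal.ofReal (‖x₁ - x₂‖ ^ (-s)) ∂μ ∂μ := by
        gcongr with x₁ x₂; exact hA _
    _ = A * ∫⁻ x₁, ∫⁻ x₂, ENNReal.ofReal (‖x₁ - x₂‖ ^ (-s)) ∂μ ∂μ := by
        have hG : Measurable fun p : E × E ↦ ENNReal.ofReal (‖p.1 - p.2‖ ^ (-s)) :=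
          ((continuous_fst.sub continuous_snd).norm.measurable.pow_const _).ennreal_ofReal
        rw [← lintegral_const_mul _ hG.lintegral_prod_right']
        exact lintegral_congr fun x₁ ↦ lintegral_const_mul _ (hG.comp measurable_prodMk_left)

end ProjectedEnergy

theorem stmt16_general (α ε : ℝ) (hε : 0 < ε) (hεα : ε < α)
    (C : ℝ) (lam : Measure Circ) [IsFiniteMeasure lam]
    (hfrost : ∀ (ω : Circ) (δ : ℝ), 0 < δ →
      lam (Metric.ball ω δ) ≤ ENNReal.ofReal (C * δ ^ α)) :
    ∃ C' > (0 : ℝ),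
      ∀ (μ : Measure Plane), IsFiniteMeasure μ →
        (∃ K : Set Plane, IsCompact K ∧ μ Kᶜ = 0) →
        (∫⁻ x₁, ∫⁻ x₂, ENNReal.ofReal (‖x₁ - x₂‖ ^ (-(α - ε))) ∂μ ∂μ) < ⊤ →
        (∫⁻ ω, (∫⁻ x₁, ∫⁻ x₂,
            ENNReal.ofReal (|(inner ℝ x₁ (ω : Plane) : ℝ) - (inner ℝ x₂ (ω : Plane) : ℝ)|
              ^ (-(α - ε))) ∂μ ∂μ) ∂lam) ≤
          ENNReal.ofReal C' *
            ∫⁻ x₁, ∫⁻ x₂, ENNReal.ofReal (‖x₁ - x₂‖ ^ (-(α - ε))) ∂μ ∂μ := by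
  set A := lam univ + 2 * ENNReal.ofReal (C * 2 ^ α) * ENNReal.ofReal (α / (α - ε) - 1)⁻¹
  have hA : A ≠ ⊤ := by finiteness
  have hunit (e : Plane) (he : ‖e‖ = 1) :
      ∫⁻ ω, ENNReal.ofReal (|⟪e, (ω : Plane)⟫_ℝ| ^ (-(α - ε))) ∂lam ≤ A :=
    lintegral_abs_inner_rpow_neg_le hfrost he (by linarith) (by linarith)
  refine ⟨A.toReal + 1, by positivity, fun μ _ _ _ ↦ ?_⟩
  calc _ ≤ A * ∫⁻ x₁, ∫⁻ x₂, ENNReal.ofReal (‖x₁ - x₂‖ ^ (-(α - ε))) ∂μ ∂μ :=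
        lintegral_projected_energy_le measurable_subtype_coe μ
          (lintegral_abs_inner_rpow_neg_le_of_norm_eq_one (by linarith) hunit)
    _ ≤ _ := by
        gcongr
        exact (ENNReal.le_ofReal_iff_toReal_le hA (by positivity)).2 (by linarith)

theorem stmt16 (α β ε : ℝ) (hα : 0 < α) (hαβ : α ≤ β) (hβ : β ≤ 1) (hε : 0 < ε) (hεα : ε < α)
    (C : ℝ) (lam : Measure Circ) [IsFiniteMeasure lam]
    (hfrost : ∀ (ω : Circ) (δ : ℝ), 0 < δ →
      lam (Metric.ball ω δ) ≤ ENNReal.ofReal (C * δ ^ α)) :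
    ∃ C' > (0 : ℝ),
      ∀ (μ : Measure Plane), IsFiniteMeasure μ →
        (∃ K : Set Plane, IsCompact K ∧ μ Kᶜ = 0) →
        (∫⁻ x₁, ∫⁻ x₂, ENNReal.ofReal (‖x₁ - x₂‖ ^ (-(α - ε))) ∂μ ∂μ) < ⊤ →
        (∫⁻ ω, (∫⁻ x₁, ∫⁻ x₂,
            ENNReal.ofReal (|(inner ℝ x₁ (ω : Plane) : ℝ) - (inner ℝ x₂ (ω : Plane) : ℝ)|
              ^ (-(α - ε))) ∂μ ∂μ) ∂lam) ≤
          ENNReal.ofReal C' *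
            ∫⁻ x₁, ∫⁻ x₂, ENNReal.ofReal (‖x₁ - x₂‖ ^ (-(α - ε))) ∂μ ∂μ :=
  stmt16_general α ε hε hεα C lam hfrost
end
end
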